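/- Let T₁ and T₂ be ditrees, each of order at least 3, such that γ(T₁ □ T₂) = γ(T₁)·γ(T₂). Then every maximum packing of T₁ is a dominating set of the underlying tree ugr(T₁), and every maximum packing of T₂ is a dominating set of ugr(T₂). Moreover, for any maximum packings P₁ of T₁ and P₂ of T₂, either P₁ contains all isolated leaves of T₁ or P₂ contains all isolated leaves of T₂. -/
import Mathlib


open SimpleGraph

variable {V W : Type*}

/-- The closed out-neighborhood of `v` in the digraph with arc relation `A`. -/
def NplusC (A : V → V → Prop) (v : V) : Set V := insert v {u | A v u}

/-- The closed in-neighborhood of `v`. -/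
def NminusC (A : V → V → Prop) (v : V) : Set V := insert v {u | A u v}

/-- The open out-neighborhood of `v`. -/
def NplusO (A : V → V → Prop) (v : V) : Set V := {u | A v u}

/-- The open in-neighborhood of `v`. -/
def NminusO (A : V → V → Prop) (v : V) : Set V := {u | A u v}

/-- `S` is a dominating set: every vertex is in a closed out-neighborhood of a member of `S`. -/
def IsDomSet (A : V → V → Prop) (S : Set V) : Prop := ∀ u, ∃ v ∈ S, u ∈ NplusC A v

/-- The domination number of a digraph. -/
noncomputable def domNum (V : Type*) [Fintype V] (A : V → V → Prop) : ℕ :=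
  sInf {n | ∃ S : Set V, IsDomSet A S ∧ S.ncard = n}

/-- `P` is a packing: closed in-neighborhoods of members are pairwise disjoint. -/
def IsPacking (A : V → V → Prop) (P : Set V) : Prop :=
  P.Pairwise fun x y => Disjoint (NminusC A x) (NminusC A y)

/-- The packing number of a digraph. -/
noncomputable def packNum (V : Type*) [Fintype V] (A : V → V → Prop) : ℕ :=
  sSup {n | ∃ P : Set V, IsPacking A P ∧ P.ncard = n}

/-- `S` is a total dominating set: every vertex has an in-neighbor in `S`. -/
def IsTotalDomSet (A : V → V → Prop) (S : Set V) : Prop := ∀ u, ∃ v ∈ S, A v u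

/-- The total domination number of a digraph. -/
noncomputable def totalDomNum (V : Type*) [Fintype V] (A : V → V → Prop) : ℕ :=
  sInf {n | ∃ S : Set V, IsTotalDomSet A S ∧ S.ncard = n}

/-- `P` is an open packing: open in-neighborhoods of members are pairwise disjoint. -/
def IsOpenPacking (A : V → V → Prop) (P : Set V) : Prop :=
  P.Pairwise fun x y => Disjoint (NminusO A x) (NminusO A y)

/-- The open packing number of a digraph. -/
noncomputable def openPackNum (V : Type*) [Fintype V] (A : V → V → Prop) : ℕ :=
  sSup {n | ∃ P : Set V, IsOpenPacking A P ∧ P.ncard = n}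

/-- The underlying (simple) graph of a digraph. -/
def ugr (A : V → V → Prop) : SimpleGraph V := SimpleGraph.fromRel A

/-- A ditree is a digraph whose underlying graph is a tree. -/
def IsDitree (A : V → V → Prop) : Prop := (ugr A).IsTree

/-- Arc relation of the Cartesian product of two digraphs. -/
def cartArc (A : V → V → Prop) (B : W → W → Prop) : V × W → V × W → Prop :=
  fun p q => (p.1 = q.1 ∧ B p.2 q.2) ∨ (p.2 = q.2 ∧ A p.1 q.1)

/-- Arc relation of the direct product of two digraphs. -/
def dirArc (A : V → V → Prop) (B : W → W → Prop) : V × W → V × W → Prop :=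
  fun p q => A p.1 q.1 ∧ B p.2 q.2

/-- The closed in-neighborhood graph of a digraph: distinct vertices are adjacent iff
their closed in-neighborhoods intersect. -/
def Ncg (A : V → V → Prop) : SimpleGraph V :=
  SimpleGraph.fromRel (fun u v => (NminusC A u ∩ NminusC A v).Nonempty)

/-- The open in-neighborhood graph of a digraph: distinct vertices are adjacent iff
their open in-neighborhoods intersect. -/
def Nog (A : V → V → Prop) : SimpleGraph V :=
  SimpleGraph.fromRel (fun u v => (NminusO A u ∩ NminusO A v).Nonempty)


lemma mem_NplusC {A : V → V → Prop} {u v : V} : u ∈ NplusC A v ↔ u = v ∨ A v u := by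
  simp [NplusC]

lemma mem_NminusC {A : V → V → Prop} {u v : V} : u ∈ NminusC A v ↔ u = v ∨ A u v := by
  simp [NminusC]

lemma mem_NplusC_iff_mem_NminusC {A : V → V → Prop} {u v : V} :
    u ∈ NplusC A v ↔ v ∈ NminusC A u := by
  simp [NplusC, NminusC, eq_comm]

lemma isDomSet_univ (A : V → V → Prop) : IsDomSet A Set.univ :=
  fun u => ⟨u, Set.mem_univ u, mem_NplusC.2 (Or.inl rfl)⟩

lemma domNum_le [Fintype V] {A : V → V → Prop} {S : Set V} (h : IsDomSet A S) :
    domNum V A ≤ S.ncard :=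
  Nat.sInf_le ⟨S, h, rfl⟩

lemma exists_domSet (V : Type*) [Fintype V] (A : V → V → Prop) :
    ∃ S : Set V, IsDomSet A S ∧ S.ncard = domNum V A := by
  have h : domNum V A ∈ {n | ∃ S : Set V, IsDomSet A S ∧ S.ncard = n} :=
    Nat.sInf_mem ⟨_, Set.univ, isDomSet_univ A, rfl⟩
  obtain ⟨S, hS, hc⟩ := h
  exact ⟨S, hS, hc⟩

lemma le_packNum [Fintype V] {A : V → V → Prop} {P : Set V} (h : IsPacking A P) :
    P.ncard ≤ packNum V A := by
  apply le_csSup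
  · refine ⟨Fintype.card V, fun n hn => ?_⟩
    obtain ⟨Q, _, hQ⟩ := hn
    rw [← hQ]
    have := Set.ncard_le_ncard (Set.subset_univ Q) (Set.toFinite _)
    simpa [Set.ncard_univ, Nat.card_eq_fintype_card] using this
  · exact ⟨P, h, rfl⟩

lemma exists_maxPacking (V : Type*) [Fintype V] (A : V → V → Prop) :
    ∃ P : Set V, IsPacking A P ∧ P.ncard = packNum V A := by
  have hne : {n | ∃ P : Set V, IsPacking A P ∧ P.ncard = n}.Nonempty :=
    ⟨0, ∅, Set.pairwise_empty _, Set.ncard_empty _⟩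
  have hbdd : BddAbove {n | ∃ P : Set V, IsPacking A P ∧ P.ncard = n} := by
    refine ⟨Fintype.card V, fun n hn => ?_⟩
    obtain ⟨Q, _, hQ⟩ := hn
    rw [← hQ]
    have := Set.ncard_le_ncard (Set.subset_univ Q) (Set.toFinite _)
    simpa [Set.ncard_univ, Nat.card_eq_fintype_card] using this
  have := Nat.sSup_mem hne hbdd
  obtain ⟨P, hP, hc⟩ := this
  exact ⟨P, hP, hc⟩

lemma domNum_pos [Fintype V] [Nonempty V] (A : V → V → Prop) : 0 < domNum V A := by
  rcases Nat.eq_zero_or_pos (domNum V A) with h | h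
  swap
  · exact h
  · exfalso
    obtain ⟨S, hS, hc⟩ := exists_domSet V A
    rw [h] at hc
    rw [Set.ncard_eq_zero (Set.toFinite _)] at hc
    obtain ⟨v, hv, _⟩ := hS (Classical.arbitrary V)
    rw [hc] at hv
    exact hv

lemma ditree_exists_arc [Fintype V] {A : V → V → Prop} (hT : IsDitree A)
    (hc : 2 ≤ Fintype.card V) : ∃ a b, A a b := by
  obtain ⟨u, v, huv⟩ := Fintype.exists_pair_of_one_lt_card (by omega : 1 < Fintype.card V)
  have hr : (ugr A).Reachable u v := hT.isConnected.preconnected u v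
  obtain ⟨w⟩ := hr
  cases w with
  | nil => exact absurd rfl huv
  | cons h _ =>
    rw [ugr, SimpleGraph.fromRel_adj] at h
    rcases h.2 with h | h
    · exact ⟨_, _, h⟩
    · exact ⟨_, _, h⟩

lemma domNum_lt_card [Fintype V] {A : V → V → Prop} (hirr : ∀ v, ¬ A v v)
    (harc : ∃ a b, A a b) : domNum V A < Fintype.card V := by
  obtain ⟨a, b, hab⟩ := harc
  have hne : a ≠ b := by rintro rfl; exact hirr a hab
  have hdom : IsDomSet A (Set.univ \ {b}) := by
    intro u
    by_cases hu : u = b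
    · exact ⟨a, ⟨Set.mem_univ a, by simp [hne]⟩, mem_NplusC.2 (Or.inr (hu ▸ hab))⟩
    · exact ⟨u, ⟨Set.mem_univ u, by simp [hu]⟩, mem_NplusC.2 (Or.inl rfl)⟩
  have hcard : (Set.univ \ {b} : Set V).ncard = Fintype.card V - 1 := by
    rw [Set.ncard_diff (by simp) (Set.toFinite _), Set.ncard_univ, Set.ncard_singleton,
      Nat.card_eq_fintype_card]
  have := domNum_le hdom
  rw [hcard] at this
  have hpos : 0 < Fintype.card V := Fintype.card_pos_iff.2 ⟨a⟩
  omega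

lemma isDomSet_image {A : V → V → Prop} {B : W → W → Prop} (e : V ≃ W)
    (h : ∀ x y, B (e x) (e y) ↔ A x y) {S : Set V} (hS : IsDomSet A S) :
    IsDomSet B (e '' S) := by
  intro u
  obtain ⟨v, hv, hu⟩ := hS (e.symm u)
  refine ⟨e v, Set.mem_image_of_mem _ hv, mem_NplusC.2 ?_⟩
  rcases mem_NplusC.1 hu with h1 | h1
  · left; rw [← h1, e.apply_symm_apply]
  · right; have := (h v (e.symm u)).2 h1; rwa [e.apply_symm_apply] at this

lemma domNum_equiv [Fintype V] [Fintype W] {A : V → V → Prop} {B : W → W → Prop}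
    (e : V ≃ W) (h : ∀ x y, B (e x) (e y) ↔ A x y) : domNum W B = domNum V A := by
  apply le_antisymm
  · obtain ⟨S, hS, hc⟩ := exists_domSet V A
    have := domNum_le (isDomSet_image e h hS)
    rwa [Set.ncard_image_of_injective _ e.injective, hc] at this
  · obtain ⟨S, hS, hc⟩ := exists_domSet W B
    have h' : ∀ x y, A (e.symm x) (e.symm y) ↔ B x y := by
      intro x y
      rw [← h (e.symm x) (e.symm y), e.apply_symm_apply, e.apply_symm_apply]
    have := domNum_le (isDomSet_image e.symm h' hS)
    rwa [Set.ncard_image_of_injective _ e.symm.injective, hc] at this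

lemma cartArc_swap {V1 V2 : Type*} (A1 : V1 → V1 → Prop) (A2 : V2 → V2 → Prop)
    (p q : V2 × V1) : cartArc A2 A1 p q ↔ cartArc A1 A2 p.swap q.swap := by
  simp [cartArc, Prod.swap]; tauto

lemma mem_NplusC_cart {V1 V2 : Type*} {A1 : V1 → V1 → Prop} {A2 : V2 → V2 → Prop}
    {x a : V1 × V2} : x ∈ NplusC (cartArc A1 A2) a ↔
      x = a ∨ (a.1 = x.1 ∧ A2 a.2 x.2) ∨ (a.2 = x.2 ∧ A1 a.1 x.1) := by
  rw [mem_NplusC]; rfl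



open Classical in
lemma key_count {ι α : Type*} (s : Finset ι) (Fam : ι → Set α) (T : Set α) (hT : T.Finite)
    (hdisj : (s : Set ι).Pairwise fun i j => Disjoint (Fam i) (Fam j))
    (hsub : ∀ i ∈ s, Fam i ⊆ T) (c : ℕ) (hlb : ∀ i ∈ s, c ≤ (Fam i).ncard)
    (hub : T.ncard ≤ s.card * c) :
    (∀ i ∈ s, (Fam i).ncard = c) ∧ (∀ x ∈ T, ∃ i ∈ s, x ∈ Fam i) ∧ T.ncard = s.card * c := by
  classical
  set G : ι → Finset α := fun i => hT.toFinset.filter (· ∈ Fam i) with hG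
  have hGs : ∀ i ∈ s, (G i : Set α) = Fam i := by
    intro i hi
    ext x
    simp only [hG, Finset.coe_filter, Set.mem_setOf_eq, Set.Finite.mem_toFinset]
    exact ⟨fun h => h.2, fun h => ⟨hsub i hi h, h⟩⟩
  have hGcard : ∀ i ∈ s, (G i).card = (Fam i).ncard := by
    intro i hi
    rw [← Set.ncard_coe_finset, hGs i hi]
  have hdisjG : ∀ i ∈ s, ∀ j ∈ s, i ≠ j → Disjoint (G i) (G j) := by
    intro i hi j hj hij
    rw [← Finset.disjoint_coe, hGs i hi, hGs j hj]
    exact hdisj hi hj hij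
  set U : Finset α := s.biUnion G with hU
  have hUsub : U ⊆ hT.toFinset := by
    intro x hx
    obtain ⟨i, hi, hxi⟩ := Finset.mem_biUnion.1 hx
    exact Finset.mem_filter.1 hxi |>.1
  have hUcard : U.card = ∑ i ∈ s, (G i).card := Finset.card_biUnion hdisjG
  have hTcard : hT.toFinset.card = T.ncard := by
    rw [← Set.ncard_coe_finset, Set.Finite.coe_toFinset]
  have hsum_ge : s.card * c ≤ ∑ i ∈ s, (G i).card := by
    calc s.card * c = ∑ _i ∈ s, c := by rw [Finset.sum_const, smul_eq_mul, mul_comm]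
    _ ≤ ∑ i ∈ s, (G i).card :=
        Finset.sum_le_sum (fun i hi => (hGcard i hi) ▸ hlb i hi)
  have hsum_le : ∑ i ∈ s, (G i).card ≤ T.ncard := by
    rw [← hUcard, ← hTcard]
    exact Finset.card_le_card hUsub
  have hsum_eq : ∑ i ∈ s, (G i).card = s.card * c := le_antisymm (by omega) hsum_ge
  have hTeq : T.ncard = s.card * c := by omega
  have hper : ∀ i ∈ s, (Fam i).ncard = c := by
    intro i hi
    by_contra hne
    have h1 := hlb i hi
    have h2 := hGcard i hi
    have hgt : c < (G i).card := by omega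
    have : ∑ _j ∈ s, c < ∑ j ∈ s, (G j).card :=
      Finset.sum_lt_sum (fun j hj => (hGcard j hj) ▸ hlb j hj) ⟨i, hi, hgt⟩
    rw [Finset.sum_const, smul_eq_mul] at this
    omega
  refine ⟨hper, ?_, hTeq⟩
  intro x hx
  have hUeq : U = hT.toFinset := by
    apply Finset.eq_of_subset_of_card_le hUsub
    omega
  have : x ∈ U := by rw [hUeq]; exact hT.mem_toFinset.2 hx
  obtain ⟨i, hi, hxi⟩ := Finset.mem_biUnion.1 this
  have : x ∈ (G i : Set α) := hxi
  rw [hGs i hi] at this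
  exact ⟨i, hi, this⟩

section MMsection
set_option linter.unusedSectionVars false
open Classical
variable [DecidableEq V] {A : V → V → Prop}

lemma ugr_adj {x y : V} : (ugr A).Adj x y ↔ x ≠ y ∧ (A x y ∨ A y x) :=
  SimpleGraph.fromRel_adj A x y

/-- Any path to `r` realizes the distance (trees have unique paths). -/
lemma path_len (hT : IsDitree A) {v r : V} {p : (ugr A).Walk v r} (hp : p.IsPath) :
    p.length = (ugr A).dist v r := by
  obtain ⟨q, hq, hql⟩ := (hT.isConnected v r).exists_path_of_dist
  have : (⟨p, hp⟩ : (ugr A).Path v r) = ⟨q, hq⟩ := hT.IsAcyclic.path_unique _ _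
  rw [Subtype.mk.injEq] at this
  rw [this, hql]

lemma dist_adj (hT : IsDitree A) {u v : V} (h : (ugr A).Adj u v) (r : V) :
    (ugr A).dist u r = (ugr A).dist v r + 1 ∨
    (ugr A).dist v r = (ugr A).dist u r + 1 := by
  obtain ⟨p, hp, hpl⟩ := (hT.isConnected u r).exists_path_of_dist
  by_cases hv : v ∈ p.support
  · left
    have hdrop : (p.dropUntil v hv).length = (ugr A).dist v r := path_len hT (hp.dropUntil hv)
    have hsplit : (p.takeUntil v hv).length + (p.dropUntil v hv).length = p.length := by
      have := congr_arg Walk.length (p.take_spec hv)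
      rwa [Walk.length_append] at this
    have htake : (p.takeUntil v hv).length ≠ 0 := by
      intro h0
      exact h.ne (Walk.eq_of_length_eq_zero h0)
    have hle : (ugr A).dist u r ≤ (ugr A).dist v r + 1 := by
      obtain ⟨q, hq, hql⟩ := (hT.isConnected v r).exists_path_of_dist
      have := SimpleGraph.dist_le (Walk.cons h q)
      rwa [Walk.length_cons, hql] at this
    omega
  · right
    have hcons : (Walk.cons h.symm p).IsPath := (Walk.cons_isPath_iff _ _).2 ⟨hp, hv⟩
    have := path_len hT hcons
    rw [Walk.length_cons, hpl] at this
    omega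

lemma lower_unique (hT : IsDitree A) {x y y' r : V} (hy : (ugr A).Adj y x)
    (hy' : (ugr A).Adj y' x) (hd : (ugr A).dist y r + 1 = (ugr A).dist x r)
    (hd' : (ugr A).dist y' r + 1 = (ugr A).dist x r) : y = y' := by
  have key : ∀ (z : V), (ugr A).Adj z x → (ugr A).dist z r + 1 = (ugr A).dist x r →
      ∃ (q : (ugr A).Walk x r) (hq : q.IsPath), q.getVert 1 = z := by
    intro z hz hzd
    obtain ⟨p, hp, hpl⟩ := (hT.isConnected z r).exists_path_of_dist
    have hx : x ∉ p.support := by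
      intro hx
      have hdrop : (p.dropUntil x hx).length = (ugr A).dist x r := path_len hT (hp.dropUntil hx)
      have hsplit : (p.takeUntil x hx).length + (p.dropUntil x hx).length = p.length := by
        have := congr_arg Walk.length (p.take_spec hx)
        rwa [Walk.length_append] at this
      omega
    refine ⟨Walk.cons hz.symm p, (Walk.cons_isPath_iff _ _).2 ⟨hp, hx⟩, ?_⟩
    rw [Walk.getVert_cons_succ, Walk.getVert_zero]
  obtain ⟨q, hq, hq1⟩ := key y hy hd
  obtain ⟨q', hq', hq1'⟩ := key y' hy' hd'
  have : (⟨q, hq⟩ : (ugr A).Path x r) = ⟨q', hq'⟩ := hT.IsAcyclic.path_unique _ _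
  rw [Subtype.mk.injEq] at this
  rw [← hq1, ← hq1', this]



variable (A) in
/-- The "lowest" in-neighbor of `u` (towards the root `r`), or `u` itself. -/
noncomputable def lowN (r u : V) : V :=
  if c : ∃ y, A y u ∧ (ugr A).dist y r < (ugr A).dist u r then c.choose else u

lemma lowN_mem (r u : V) : lowN A r u ∈ NminusC A u := by
  rw [lowN]
  split_ifs with c
  · exact mem_NminusC.2 (Or.inr c.choose_spec.1)
  · exact mem_NminusC.2 (Or.inl rfl)

lemma lowN_le (r u : V) : (ugr A).dist (lowN A r u) r ≤ (ugr A).dist u r := by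
  rw [lowN]
  split_ifs with c
  · exact le_of_lt c.choose_spec.2
  · exact le_refl _

lemma lowN_lt (r u : V) (c : ∃ y, A y u ∧ (ugr A).dist y r < (ugr A).dist u r) :
    (ugr A).dist (lowN A r u) r < (ugr A).dist u r := by
  rw [lowN, dif_pos c]
  exact c.choose_spec.2

lemma lowN_dichot (hT : IsDitree A) (r u : V) :
    lowN A r u = u ∨ (A (lowN A r u) u ∧
      (ugr A).dist u r = (ugr A).dist (lowN A r u) r + 1) := by
  by_cases c : ∃ y, A y u ∧ (ugr A).dist y r < (ugr A).dist u r
  · right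
    have h1 : A (lowN A r u) u := by rw [lowN, dif_pos c]; exact c.choose_spec.1
    have h2 := lowN_lt (A := A) r u c
    have hne : lowN A r u ≠ u := by
      intro h; rw [h] at h2; omega
    have hadj : (ugr A).Adj (lowN A r u) u := ugr_adj.2 ⟨hne, Or.inl h1⟩
    rcases dist_adj hT hadj r with h | h
    · omega
    · exact ⟨h1, h⟩
  · left
    rw [lowN, dif_neg c]

lemma NminusC_dist_ge (hT : IsDitree A) {r u y : V} (hy : y ∈ NminusC A u) :
    (ugr A).dist u r ≤ (ugr A).dist y r + 1 := by
  rcases mem_NminusC.1 hy with h | h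
  · rw [h]; omega
  · by_cases hne : y = u
    · rw [hne]; omega
    · have hadj : (ugr A).Adj y u := ugr_adj.2 ⟨hne, Or.inl h⟩
      rcases dist_adj hT hadj r with h1 | h1 <;> omega

/-- The key geometric claim. -/
lemma lowN_claim (hT : IsDitree A) {r us u' x : V}
    (hle : (ugr A).dist (lowN A r u') r ≤ (ugr A).dist (lowN A r us) r)
    (hx1 : x ∈ NminusC A us) (hx2 : x ∈ NminusC A u') :
    lowN A r us ∈ NminusC A u' := by
  by_cases hxh : x = lowN A r us
  · rwa [hxh] at hx2
  have hlowmem := NminusC_dist_ge hT (r := r) (lowN_mem (A := A) r u')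
  have hlowle := lowN_le (A := A) r u'
  rcases lowN_dichot hT r us with hI | ⟨hIIa, hIIb⟩
  · have hIe : (ugr A).dist (lowN A r us) r = (ugr A).dist us r := by rw [hI]
    have hxus : A x us := by
      rcases mem_NminusC.1 hx1 with h | h
      · exact absurd (h.trans hI.symm) hxh
      · exact h
    have hxne : x ≠ us := fun h => hxh (h.trans hI.symm)
    have hadj : (ugr A).Adj x us := ugr_adj.2 ⟨hxne, Or.inl hxus⟩
    rcases dist_adj hT hadj r with hcase | hcase
    swap
    · exfalso
      have h2 := lowN_lt (A := A) r us ⟨x, hxus, by omega⟩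
      omega
    · by_cases hxu' : x = u'
      · have hu'd : (ugr A).dist u' r = (ugr A).dist us r + 1 := by rw [← hxu']; exact hcase
        rcases lowN_dichot hT r u' with h3 | ⟨h3a, h3b⟩
        · rw [h3] at hle; omega
        · have hadj2 : (ugr A).Adj (lowN A r u') u' := by
            refine ugr_adj.2 ⟨?_, Or.inl h3a⟩
            intro h; rw [h] at h3b; omega
          have hadjus : (ugr A).Adj us u' := (hxu' ▸ hadj).symm
          have h4 : us = lowN A r u' :=
            lower_unique (r := r) hT hadjus hadj2 (by omega) (by omega)
          rw [hI, h4]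
          exact lowN_mem (A := A) r u'
      · rcases mem_NminusC.1 hx2 with h | h
        · exact absurd h hxu'
        · have hadj2 : (ugr A).Adj x u' := ugr_adj.2 ⟨hxu', Or.inl h⟩
          rcases dist_adj hT hadj2 r with hc2 | hc2
          · have h4 : u' = us :=
              lower_unique (r := r) hT hadj2.symm hadj.symm (by omega) (by omega)
            rw [hI, h4]
            exact mem_NminusC.2 (Or.inl rfl)
          · exfalso
            omega
  · have hhsne : lowN A r us ≠ us := by intro h; rw [h] at hIIb; omega
    have hadjh : (ugr A).Adj (lowN A r us) us := ugr_adj.2 ⟨hhsne, Or.inl hIIa⟩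
    by_cases hxus : x = us
    · subst hxus
      rcases mem_NminusC.1 hx2 with h | h
      · rw [← h]
        exact mem_NminusC.2 (Or.inr hIIa)
      · by_cases hne2 : x = u'
        · rw [← hne2]
          exact mem_NminusC.2 (Or.inr hIIa)
        · have hadj2 : (ugr A).Adj x u' := ugr_adj.2 ⟨hne2, Or.inl h⟩
          rcases dist_adj hT hadj2 r with hc2 | hc2
          · have h4 : u' = lowN A r x :=
              lower_unique (r := r) hT hadj2.symm hadjh (by omega) (by omega)
            rw [h4]
            exact mem_NminusC.2 (Or.inl rfl)
          · exfalso
            omega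
    · have hxA : A x us := by
        rcases mem_NminusC.1 hx1 with h | h
        · exact absurd h hxus
        · exact h
      have hadjx : (ugr A).Adj x us := ugr_adj.2 ⟨hxus, Or.inl hxA⟩
      rcases dist_adj hT hadjx r with hc | hc
      · rcases mem_NminusC.1 hx2 with h | h
        · exfalso
          rw [h] at hc
          omega
        · by_cases hne2 : x = u'
          · exfalso
            rw [hne2] at hc
            omega
          · have hadj2 : (ugr A).Adj x u' := ugr_adj.2 ⟨hne2, Or.inl h⟩
            rcases dist_adj hT hadj2 r with hc2 | hc2
            · have h4 : u' = us :=
                lower_unique (r := r) hT hadj2.symm hadjx.symm (by omega) (by omega)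
              rw [h4]
              exact mem_NminusC.2 (Or.inr hIIa)
            · exfalso
              omega
      · exfalso
        exact hxh (lower_unique (r := r) hT hadjx hadjh (by omega) (by omega))

lemma MMaux (hT : IsDitree A) (r : V) :
    ∀ (n : ℕ) (U : Finset V), U.card ≤ n →
      ∃ (Pk S : Finset V), ↑Pk ⊆ U ∧ IsPacking A (Pk : Set V) ∧ S.card ≤ Pk.card ∧
        (∀ u ∈ U, ∃ s ∈ S, s ∈ NminusC A u) := by
  intro n
  induction n with
  | zero =>
    intro U hU
    have : U = ∅ := Finset.card_eq_zero.1 (Nat.le_zero.1 hU)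
    subst this
    refine ⟨∅, ∅, Finset.Subset.refl _, ?_, le_refl _, by simp⟩
    rw [Finset.coe_empty]
    exact Set.pairwise_empty _
  | succ n ih =>
    intro U hU
    rcases Finset.eq_empty_or_nonempty U with rfl | hne
    · refine ⟨∅, ∅, Finset.Subset.refl _, ?_, le_refl _, by simp⟩
      rw [Finset.coe_empty]
      exact Set.pairwise_empty _
    obtain ⟨us, hus, hmax⟩ :=
      U.exists_max_image (fun u => (ugr A).dist (lowN A r u) r) hne
    set h0 : V := lowN A r us with hh0
    set U' : Finset V := U.filter (fun u => h0 ∉ NminusC A u) with hU'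
    have husU' : us ∉ U' := by
      simp only [hU', Finset.mem_filter]
      rintro ⟨-, hn⟩
      exact hn (lowN_mem (A := A) r us)
    have hU'card : U'.card ≤ n := by
      have h1 : U' ⊆ U := Finset.filter_subset _ _
      have h2 : U'.card < U.card := Finset.card_lt_card ⟨h1, fun hsub => husU' (hsub hus)⟩
      omega
    obtain ⟨Pk', S', hPk'sub, hPk'pack, hS'card, hS'cov⟩ := ih U' hU'card
    have husPk' : us ∉ Pk' := fun h => husU' (hPk'sub h)
    refine ⟨insert us Pk', insert h0 S', ?_, ?_, ?_, ?_⟩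
    · intro x hx
      rcases Finset.mem_insert.1 hx with rfl | hx
      · exact hus
      · exact Finset.filter_subset _ _ (hPk'sub hx)
    · rw [Finset.coe_insert]
      apply Set.Pairwise.insert hPk'pack
      intro p hp hpne
      have hdisj : Disjoint (NminusC A us) (NminusC A p) := by
        rw [Set.disjoint_left]
        intro x hx1 hx2
        have hpU : p ∈ U := Finset.filter_subset _ _ (hPk'sub hp)
        have hclaim := lowN_claim hT (r := r) (us := us) (u' := p)
          (hmax p hpU) hx1 hx2
        have : p ∈ U' := hPk'sub hp
        rw [hU', Finset.mem_filter] at this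
        exact this.2 hclaim
      exact ⟨hdisj, hdisj.symm⟩
    · calc (insert h0 S').card ≤ S'.card + 1 := Finset.card_insert_le _ _
      _ ≤ Pk'.card + 1 := by omega
      _ = (insert us Pk').card := (Finset.card_insert_of_notMem husPk').symm
    · intro u hu
      by_cases hmem : h0 ∈ NminusC A u
      · exact ⟨h0, Finset.mem_insert_self _ _, hmem⟩
      · have : u ∈ U' := Finset.mem_filter.2 ⟨hu, hmem⟩
        obtain ⟨s, hs, hsmem⟩ := hS'cov u this
        exact ⟨s, Finset.mem_insert_of_mem hs, hsmem⟩

lemma domNum_le_packNum [Fintype V] {A : V → V → Prop} (hT : IsDitree A) :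
    domNum V A ≤ packNum V A := by
  classical
  have hne : Nonempty V := hT.isConnected.nonempty
  obtain ⟨Pk, S, -, hpack, hcard, hcov⟩ :=
    MMaux hT (Classical.arbitrary V) (Finset.univ.card) Finset.univ (le_refl _)
  have hdom : IsDomSet A (S : Set V) := by
    intro u
    obtain ⟨s, hs, hmem⟩ := hcov u (Finset.mem_univ u)
    exact ⟨s, hs, mem_NplusC_iff_mem_NminusC.2 hmem⟩
  calc domNum V A ≤ (S : Set V).ncard := domNum_le hdom
  _ = S.card := Set.ncard_coe_finset _
  _ ≤ Pk.card := hcard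
  _ = (Pk : Set V).ncard := (Set.ncard_coe_finset _).symm
  _ ≤ packNum V A := le_packNum hpack

end MMsection


section Product
variable {V1 V2 : Type*} {A1 : V1 → V1 → Prop} {A2 : V2 → V2 → Prop}

lemma slice_dom_snd {D : Set (V1 × V2)} (hD : IsDomSet (cartArc A1 A2) D) (p : V1) :
    IsDomSet A2 (Prod.snd '' {d ∈ D | d.1 ∈ NminusC A1 p}) := by
  intro h
  obtain ⟨v, hvD, hvmem⟩ := hD (p, h)
  rcases mem_NplusC_cart.1 hvmem with hc | hc | hc
  · refine ⟨h, ⟨v, ⟨hvD, ?_⟩, ?_⟩, mem_NplusC.2 (Or.inl rfl)⟩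
    · rw [← hc]; exact mem_NminusC.2 (Or.inl rfl)
    · rw [← hc]
  · refine ⟨v.2, ⟨v, ⟨hvD, ?_⟩, rfl⟩, mem_NplusC.2 (Or.inr hc.2)⟩
    rw [hc.1]; exact mem_NminusC.2 (Or.inl rfl)
  · refine ⟨h, ⟨v, ⟨hvD, mem_NminusC.2 (Or.inr hc.2)⟩, hc.1⟩, mem_NplusC.2 (Or.inl rfl)⟩

lemma slice_dom_fst {D : Set (V1 × V2)} (hD : IsDomSet (cartArc A1 A2) D) (q : V2) :
    IsDomSet A1 (Prod.fst '' {d ∈ D | d.2 ∈ NminusC A2 q}) := by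
  intro g
  obtain ⟨v, hvD, hvmem⟩ := hD (g, q)
  rcases mem_NplusC_cart.1 hvmem with hc | hc | hc
  · refine ⟨g, ⟨v, ⟨hvD, ?_⟩, ?_⟩, mem_NplusC.2 (Or.inl rfl)⟩
    · rw [← hc]; exact mem_NminusC.2 (Or.inl rfl)
    · rw [← hc]
  · refine ⟨g, ⟨v, ⟨hvD, mem_NminusC.2 (Or.inr hc.2)⟩, hc.1⟩, mem_NplusC.2 (Or.inl rfl)⟩
  · refine ⟨v.1, ⟨v, ⟨hvD, ?_⟩, rfl⟩, mem_NplusC.2 (Or.inr hc.2)⟩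
    rw [hc.1]; exact mem_NminusC.2 (Or.inl rfl)

lemma part [Fintype V1] [Fintype V2] [Nonempty V2] (hT1 : IsDitree A1)
    {P : Set V1} (hP : IsPacking A1 P) (hPmax : P.ncard = packNum V1 A1)
    {D : Set (V1 × V2)} (hD : IsDomSet (cartArc A1 A2) D)
    (hDcard : D.ncard = domNum V1 A1 * domNum V2 A2) :
    (∀ d ∈ D, ∃ p ∈ P, d.1 ∈ NminusC A1 p) ∧
    (∀ p ∈ P, {d ∈ D | d.1 ∈ NminusC A1 p}.ncard = domNum V2 A2) ∧
    P.ncard = domNum V1 A1 := by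
  classical
  have hPTcoe : ((P.toFinite.toFinset : Finset V1) : Set V1) = P := Set.Finite.coe_toFinset _
  have hPTcard : (P.toFinite.toFinset).card = P.ncard := by
    rw [← Set.ncard_coe_finset, hPTcoe]
  have hγ1 : domNum V1 A1 ≤ (P.toFinite.toFinset).card := by
    rw [hPTcard, hPmax]
    exact domNum_le_packNum hT1
  have hdisjP : ((P.toFinite.toFinset : Finset V1) : Set V1).Pairwise
      (fun p p' => Disjoint {d ∈ D | d.1 ∈ NminusC A1 p} {d ∈ D | d.1 ∈ NminusC A1 p'}) := by
    rw [hPTcoe]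
    intro p hp p' hp' hne
    rw [Set.disjoint_left]
    rintro d ⟨-, hd1⟩ ⟨-, hd2⟩
    exact Set.disjoint_left.1 (hP hp hp' hne) hd1 hd2
  have hsubP : ∀ p ∈ P.toFinite.toFinset, {d ∈ D | d.1 ∈ NminusC A1 p} ⊆ D :=
    fun p _ d hd => hd.1
  have hlbP : ∀ p ∈ P.toFinite.toFinset, domNum V2 A2 ≤ {d ∈ D | d.1 ∈ NminusC A1 p}.ncard := by
    intro p _
    calc domNum V2 A2 ≤ (Prod.snd '' {d ∈ D | d.1 ∈ NminusC A1 p}).ncard :=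
          domNum_le (slice_dom_snd hD p)
    _ ≤ {d ∈ D | d.1 ∈ NminusC A1 p}.ncard := Set.ncard_image_le (Set.toFinite _)
  have hubP : D.ncard ≤ (P.toFinite.toFinset).card * domNum V2 A2 := by
    rw [hDcard]
    exact Nat.mul_le_mul_right _ hγ1
  obtain ⟨hslice, hcover, hcard⟩ := key_count (P.toFinite.toFinset)
    (fun p => {d ∈ D | d.1 ∈ NminusC A1 p}) D (Set.toFinite D) hdisjP hsubP
    (domNum V2 A2) hlbP hubP
  have hγ2pos : 0 < domNum V2 A2 := domNum_pos A2
  have hPeq : P.ncard = domNum V1 A1 := by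
    rw [hDcard] at hcard
    have := Nat.eq_of_mul_eq_mul_right hγ2pos hcard
    omega
  refine ⟨?_, ?_, hPeq⟩
  · intro d hd
    obtain ⟨p, hp, hdp⟩ := hcover d hd
    exact ⟨p, (Set.Finite.mem_toFinset _).1 hp, hdp.2⟩
  · intro p hp
    exact hslice p ((Set.Finite.mem_toFinset _).2 hp)

lemma engineLeaf [Fintype V1] [Fintype V2]
    (hirr1 : ∀ v, ¬ A1 v v) (hirr2 : ∀ v, ¬ A2 v v)
    (hT1 : IsDitree A1) (hT2 : IsDitree A2) (hc2 : 3 ≤ Fintype.card V2)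
    (heq : domNum (V1 × V2) (cartArc A1 A2) = domNum V1 A1 * domNum V2 A2)
    {P : Set V1} (hP : IsPacking A1 P) (hPmax : P.ncard = packNum V1 A1)
    {l : V1} (hnoin : ¬ ∃ u, A1 u l) : l ∈ P := by
  classical
  have hne2 : Nonempty V2 := hT2.isConnected.nonempty
  by_contra hl
  obtain ⟨D, hD, hDc⟩ := exists_domSet (V1 × V2) (cartArc A1 A2)
  rw [heq] at hDc
  obtain ⟨cover, slice, hPcard⟩ := part hT1 hP hPmax hD hDc
  -- maximality of P yields p1 with A1 l p1
  have hNl : NminusC A1 l = {l} := by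
    ext x
    rw [mem_NminusC]
    simp only [Set.mem_singleton_iff]
    exact ⟨fun h => h.elim id (fun h' => absurd ⟨x, h'⟩ hnoin), Or.inl⟩
  have hext : ¬ IsPacking A1 (insert l P) := by
    intro hpack
    have hcard := le_packNum hpack
    rw [Set.ncard_insert_of_notMem hl (Set.toFinite _), hPmax] at hcard
    omega
  have hex : ∃ p ∈ P, ¬ Disjoint (NminusC A1 l) (NminusC A1 p) := by
    by_contra hnone
    push_neg at hnone
    exact hext (hP.insert (fun p hp _ => ⟨hnone p hp, (hnone p hp).symm⟩))
  obtain ⟨p1, hp1P, hnd⟩ := hex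
  obtain ⟨x, hx1, hx2⟩ := Set.not_disjoint_iff.1 hnd
  rw [hNl, Set.mem_singleton_iff] at hx1
  subst hx1
  have hlp1 : A1 x p1 := by
    rcases mem_NminusC.1 hx2 with h | h
    · exact absurd (h ▸ hp1P) hl
    · exact h
  have hlnep1 : x ≠ p1 := fun h => hirr1 _ (h ▸ hlp1)
  -- the column of l
  have hSdom : IsDomSet A2 {h | (x, h) ∈ D} := by
    intro h
    obtain ⟨v, hvD, hvmem⟩ := hD (x, h)
    rcases mem_NplusC_cart.1 hvmem with hc | hc | hc
    · refine ⟨h, ?_, mem_NplusC.2 (Or.inl rfl)⟩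
      show (x, h) ∈ D
      rw [hc]; exact hvD
    · refine ⟨v.2, ?_, mem_NplusC.2 (Or.inr hc.2)⟩
      show (x, v.2) ∈ D
      have : v = (x, v.2) := Prod.ext hc.1 rfl
      rwa [← this]
    · exact absurd ⟨v.1, hc.2⟩ hnoin
  have hSsub : (fun h => (x, h)) '' {h | (x, h) ∈ D} ⊆ {d ∈ D | d.1 ∈ NminusC A1 p1} := by
    rintro d ⟨h, hh, rfl⟩
    exact ⟨hh, mem_NminusC.2 (Or.inr hlp1)⟩
  have himg : ((fun h => (x, h)) '' {h | (x, h) ∈ D}).ncard = {h | (x, h) ∈ D}.ncard :=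
    Set.ncard_image_of_injective _ (fun a b hab => show ((x,a)).2 = ((x,b)).2 from congrArg Prod.snd hab)
  have hslice1 := slice p1 hp1P
  have hEq : (fun h => (x, h)) '' {h | (x, h) ∈ D} = {d ∈ D | d.1 ∈ NminusC A1 p1} := by
    apply Set.eq_of_subset_of_ncard_le hSsub _ (Set.toFinite _)
    rw [hslice1, himg]
    exact domNum_le hSdom
  have hSall : ∀ k, k ∈ {h | (x, h) ∈ D} := by
    intro k
    obtain ⟨w, hwD, hwmem⟩ := hD (p1, k)
    have hw1 : w.1 ∈ NminusC A1 p1 := by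
      rcases mem_NplusC_cart.1 hwmem with hc | hc | hc
      · rw [← hc]; exact mem_NminusC.2 (Or.inl rfl)
      · rw [hc.1]; exact mem_NminusC.2 (Or.inl rfl)
      · exact mem_NminusC.2 (Or.inr hc.2)
    have hwF : w ∈ {d ∈ D | d.1 ∈ NminusC A1 p1} := ⟨hwD, hw1⟩
    rw [← hEq] at hwF
    obtain ⟨s, hsS, hws⟩ := hwF
    rcases mem_NplusC_cart.1 hwmem with hc | hc | hc
    · exact absurd (show x = p1 from congrArg Prod.fst (hws.trans hc.symm)) hlnep1
    · exact absurd (show x = p1 from (congrArg Prod.fst hws).trans hc.1) hlnep1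
    · have hsk : s = k := (congrArg Prod.snd hws).trans hc.1
      rwa [hsk] at hsS
  -- contradiction
  have hSuniv : {h | (x, h) ∈ D} = Set.univ := Set.eq_univ_of_forall hSall
  have hScard : {h | (x, h) ∈ D}.ncard = domNum V2 A2 := by
    rw [← hslice1, ← hEq, himg]
  rw [hSuniv, Set.ncard_univ, Nat.card_eq_fintype_card] at hScard
  have harc := ditree_exists_arc hT2 (by omega)
  have := domNum_lt_card hirr2 harc
  omega


lemma engine [Fintype V1] [Fintype V2]
    (hirr1 : ∀ v, ¬ A1 v v) (hirr2 : ∀ v, ¬ A2 v v)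
    (hT1 : IsDitree A1) (hT2 : IsDitree A2) (hc2 : 3 ≤ Fintype.card V2)
    (heq : domNum (V1 × V2) (cartArc A1 A2) = domNum V1 A1 * domNum V2 A2)
    {P : Set V1} (hP : IsPacking A1 P) (hPmax : P.ncard = packNum V1 A1)
    (u : V1) : ∃ x ∈ P, u = x ∨ (ugr A1).Adj x u := by
  classical
  have hne1 : Nonempty V1 := hT1.isConnected.nonempty
  have hne2 : Nonempty V2 := hT2.isConnected.nonempty
  by_contra hcon
  push_neg at hcon
  obtain ⟨D, hD, hDc⟩ := exists_domSet (V1 × V2) (cartArc A1 A2)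
  rw [heq] at hDc
  obtain ⟨P2, hP2, hP2max⟩ := exists_maxPacking V2 A2
  obtain ⟨cover1, slice1, hPcard⟩ := part hT1 hP hPmax hD hDc
  -- transported row partition
  have hD' : IsDomSet (cartArc A2 A1) (Prod.swap '' D) := by
    intro w
    obtain ⟨v, hvD, hvmem⟩ := hD w.swap
    refine ⟨v.swap, Set.mem_image_of_mem _ hvD, mem_NplusC.2 ?_⟩
    rcases mem_NplusC.1 hvmem with h | h
    · left; rw [← h, Prod.swap_swap]
    · right
      rw [cartArc_swap A1 A2, Prod.swap_swap]
      exact h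
  have hD'c : (Prod.swap '' D).ncard = domNum V2 A2 * domNum V1 A1 := by
    rw [Set.ncard_image_of_injective _ Prod.swap_injective, hDc, mul_comm]
  obtain ⟨cover2', slice2', hP2card⟩ := part hT2 hP2 hP2max hD' hD'c
  have cover2 : ∀ d ∈ D, ∃ q ∈ P2, d.2 ∈ NminusC A2 q := by
    intro d hd
    obtain ⟨q, hq, hmem⟩ := cover2' d.swap (Set.mem_image_of_mem _ hd)
    exact ⟨q, hq, hmem⟩
  have band : ∀ q ∈ P2, {d ∈ D | d.2 ∈ NminusC A2 q}.ncard = domNum V1 A1 := by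
    intro q hq
    have h1 := slice2' q hq
    have hEq : {d' ∈ Prod.swap '' D | d'.1 ∈ NminusC A2 q}
        = Prod.swap '' {d ∈ D | d.2 ∈ NminusC A2 q} := by
      ext d'
      constructor
      · rintro ⟨hd', hmem⟩
        obtain ⟨d, hd, rfl⟩ := hd'
        exact ⟨d, ⟨hd, hmem⟩, rfl⟩
      · rintro ⟨d, ⟨hd, hmem⟩, rfl⟩
        exact ⟨Set.mem_image_of_mem _ hd, hmem⟩
    rw [hEq, Set.ncard_image_of_injective _ Prod.swap_injective] at h1
    exact h1
  -- no D-entry has first coordinate u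
  have hnotu : ∀ d ∈ D, d.1 ≠ u := by
    intro d hd hdu
    obtain ⟨p, hpP, hup⟩ := cover1 d hd
    rw [hdu] at hup
    rcases mem_NminusC.1 hup with h' | h'
    · exact (hcon p hpP).1 h'
    · refine (hcon p hpP).2 (ugr_adj.2 ⟨?_, Or.inr h'⟩)
      intro hpu
      exact hirr1 u (hpu ▸ h')
  -- every row is in P2
  have key : ∀ h : V2, h ∈ P2 := by
    intro h
    obtain ⟨v, hvD, hvmem⟩ := hD (u, h)
    rcases mem_NplusC_cart.1 hvmem with hc | hc | hc
    · exact absurd (show v.1 = u from congrArg Prod.fst hc.symm) (hnotu v hvD)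
    · exact absurd hc.1 (hnotu v hvD)
    · -- hc : v.2 = (u,h).2 ∧ A1 v.1 (u,h).1
      obtain ⟨p, hpP, hap⟩ := cover1 v hvD
      have haTp : A1 v.1 p := by
        rcases mem_NminusC.1 hap with h' | h'
        · exfalso
          have hA : A1 p u := h' ▸ hc.2
          refine (hcon p hpP).2 (ugr_adj.2 ⟨?_, Or.inl hA⟩)
          intro hpu
          exact hirr1 u (hpu ▸ hA)
        · exact h'
      have hanep : v.1 ≠ p := fun h' => hirr1 p (h' ▸ haTp)
      obtain ⟨q, hqP2, hhq⟩ := cover2 v hvD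
      have hBcard := band q hqP2
      have hSdom : IsDomSet A1 (Prod.fst '' {d ∈ D | d.2 ∈ NminusC A2 q}) :=
        slice_dom_fst hD q
      have hScard : (Prod.fst '' {d ∈ D | d.2 ∈ NminusC A2 q}).ncard = domNum V1 A1 :=
        le_antisymm (hBcard ▸ Set.ncard_image_le (Set.toFinite _)) (domNum_le hSdom)
      have hinj : Set.InjOn Prod.fst {d ∈ D | d.2 ∈ NminusC A2 q} :=
        (Set.ncard_image_iff (Set.toFinite _)).1 (by rw [hScard, ← hBcard])
      -- unique representative of N⁻[p] in the band, via counting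
      have hPTcoe : ((P.toFinite.toFinset : Finset V1) : Set V1) = P := Set.Finite.coe_toFinset _
      have hdisjR : ((P.toFinite.toFinset : Finset V1) : Set V1).Pairwise
          (fun a b => Disjoint ((Prod.fst '' {d ∈ D | d.2 ∈ NminusC A2 q}) ∩ NminusC A1 a)
            ((Prod.fst '' {d ∈ D | d.2 ∈ NminusC A2 q}) ∩ NminusC A1 b)) := by
        rw [hPTcoe]
        intro a ha b hb hne
        rw [Set.disjoint_left]
        rintro y ⟨-, hy1⟩ ⟨-, hy2⟩
        exact Set.disjoint_left.1 (hP ha hb hne) hy1 hy2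
      have hsubR : ∀ p' ∈ P.toFinite.toFinset,
          (Prod.fst '' {d ∈ D | d.2 ∈ NminusC A2 q}) ∩ NminusC A1 p'
            ⊆ Prod.fst '' {d ∈ D | d.2 ∈ NminusC A2 q} :=
        fun p' _ => Set.inter_subset_left
      have hlbR : ∀ p' ∈ P.toFinite.toFinset,
          1 ≤ ((Prod.fst '' {d ∈ D | d.2 ∈ NminusC A2 q}) ∩ NminusC A1 p').ncard := by
        intro p' hp'
        obtain ⟨sv, hsv, hpmem⟩ := hSdom p'
        have hsvmem : sv ∈ (Prod.fst '' {d ∈ D | d.2 ∈ NminusC A2 q}) ∩ NminusC A1 p' :=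
          ⟨hsv, mem_NplusC_iff_mem_NminusC.1 hpmem⟩
        have hpos := (Set.ncard_pos (Set.toFinite _)).2 ⟨sv, hsvmem⟩
        omega
      have hubR : (Prod.fst '' {d ∈ D | d.2 ∈ NminusC A2 q}).ncard
          ≤ (P.toFinite.toFinset).card * 1 := by
        rw [hScard, mul_one, ← Set.ncard_coe_finset, hPTcoe, hPcard]
      obtain ⟨hone, -, -⟩ := key_count (P.toFinite.toFinset)
        (fun p' => (Prod.fst '' {d ∈ D | d.2 ∈ NminusC A2 q}) ∩ NminusC A1 p')
        (Prod.fst '' {d ∈ D | d.2 ∈ NminusC A2 q}) (Set.toFinite _) hdisjR hsubR 1 hlbR hubR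
      have hpmem : p ∈ P.toFinite.toFinset := (Set.Finite.mem_toFinset _).2 hpP
      obtain ⟨x0, hx0⟩ := Set.ncard_eq_one.1 (hone p hpmem)
      -- dominator of (p, q)
      obtain ⟨w, hwD, hwmem⟩ := hD (p, q)
      have hw12 : w.1 ∈ NminusC A1 p ∧ w.2 ∈ NminusC A2 q := by
        rcases mem_NplusC_cart.1 hwmem with hc' | hc' | hc'
        · rw [← hc']
          exact ⟨mem_NminusC.2 (Or.inl rfl), mem_NminusC.2 (Or.inl rfl)⟩
        · exact ⟨by rw [hc'.1]; exact mem_NminusC.2 (Or.inl rfl), mem_NminusC.2 (Or.inr hc'.2)⟩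
        · exact ⟨mem_NminusC.2 (Or.inr hc'.2), by rw [hc'.1]; exact mem_NminusC.2 (Or.inl rfl)⟩
      have hwB : w ∈ {d ∈ D | d.2 ∈ NminusC A2 q} := ⟨hwD, hw12.2⟩
      have hvB : v ∈ {d ∈ D | d.2 ∈ NminusC A2 q} := ⟨hvD, hhq⟩
      have hwv : w.1 = v.1 := by
        have h1 : w.1 ∈ (Prod.fst '' {d ∈ D | d.2 ∈ NminusC A2 q}) ∩ NminusC A1 p :=
          ⟨Set.mem_image_of_mem _ hwB, hw12.1⟩
        have h2 : v.1 ∈ (Prod.fst '' {d ∈ D | d.2 ∈ NminusC A2 q}) ∩ NminusC A1 p :=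
          ⟨Set.mem_image_of_mem _ hvB, hap⟩
        rw [hx0, Set.mem_singleton_iff] at h1 h2
        rw [h1, h2]
      rcases mem_NplusC_cart.1 hwmem with hc' | hc' | hc'
      · exact absurd ((hwv.symm).trans (show w.1 = p from congrArg Prod.fst hc'.symm)) hanep
      · exact absurd ((hwv.symm).trans hc'.1) hanep
      · -- hc' : w.2 = q ∧ A1 w.1 p ; injectivity forces w = v, so q = h
        have hweq : w = v := hinj hwB hvB hwv
        have h1 : w.2 = q := hc'.1
        have h2 : v.2 = h := hc.1
        rw [hweq] at h1
        have hqh : q = h := h1.symm.trans h2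
        rwa [← hqh]
  -- endgame
  have hP2univ : P2 = Set.univ := Set.eq_univ_of_forall key
  have hcard2 : domNum V2 A2 = Fintype.card V2 := by
    rw [← hP2card, hP2univ, Set.ncard_univ, Nat.card_eq_fintype_card]
  have harc := ditree_exists_arc hT2 (by omega)
  have := domNum_lt_card hirr2 harc
  omega


end Product


theorem stmt19 {V1 V2 : Type*} [Fintype V1] [Fintype V2]
    (A1 : V1 → V1 → Prop) (A2 : V2 → V2 → Prop)
    (hirr1 : ∀ v, ¬ A1 v v) (hirr2 : ∀ v, ¬ A2 v v)
    (hT1 : IsDitree A1) (hT2 : IsDitree A2)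
    (hc1 : 3 ≤ Fintype.card V1) (hc2 : 3 ≤ Fintype.card V2)
    (heq : domNum (V1 × V2) (cartArc A1 A2) = domNum V1 A1 * domNum V2 A2) :
    (∀ P : Set V1, IsPacking A1 P → P.ncard = packNum V1 A1 →
      ∀ u : V1, ∃ x ∈ P, u = x ∨ (ugr A1).Adj x u) ∧
    (∀ P : Set V2, IsPacking A2 P → P.ncard = packNum V2 A2 →
      ∀ u : V2, ∃ x ∈ P, u = x ∨ (ugr A2).Adj x u) ∧
    (∀ (P1 : Set V1) (P2 : Set V2),
      IsPacking A1 P1 → P1.ncard = packNum V1 A1 →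
      IsPacking A2 P2 → P2.ncard = packNum V2 A2 →
      (∀ l : V1, ((ugr A1).neighborSet l).ncard = 1 → (¬ ∃ u, A1 u l) → l ∈ P1) ∨
      (∀ l : V2, ((ugr A2).neighborSet l).ncard = 1 → (¬ ∃ u, A2 u l) → l ∈ P2)) := by
  classical
  have hswapnum : domNum (V1 × V2) (cartArc A1 A2) = domNum (V2 × V1) (cartArc A2 A1) := by
    refine domNum_equiv (Equiv.prodComm V2 V1) ?_
    intro x y
    exact (cartArc_swap A1 A2 x y).symm
  have heq2 : domNum (V2 × V1) (cartArc A2 A1) = domNum V2 A2 * domNum V1 A1 := by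
    rw [← hswapnum, heq, mul_comm]
  refine ⟨?_, ?_, ?_⟩
  · intro P hP hPmax u
    exact engine hirr1 hirr2 hT1 hT2 hc2 heq hP hPmax u
  · intro P hP hPmax u
    exact engine hirr2 hirr1 hT2 hT1 hc1 heq2 hP hPmax u
  · intro P1 P2 hP1 hP1max hP2 hP2max
    left
    intro l _ hno
    exact engineLeaf hirr1 hirr2 hT1 hT2 hc2 heq hP1 hP1max hno
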